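/- arXiv:2603.16005 — 2 statements merged into one kernel-verified Lean document; each statement's English description precedes it below -/
import Mathlib

section
/- Assume the cost c(x,y) = h(x−y) satisfies (H1)–(H3), and let Q, P be Borel probability measures on ℝ^d with Q absolutely continuous with respect to Lebesgue measure. Then for every u ∈ ℝ^d, the breakdown point of the optimal transport map at u satisfies BP(u) ≥ TD(u;Q). -/
/-!
Let `ε` be such that `S_ε(u)` is unbounded, and pick `y ∈ ∂^c f(u)` far away, for a Kantorovich
potential `f` towards an `ε`-contamination of `P`. By (H2), `h ≤ h(p)` on a cone with vertex
`p = u - y`; as `h` is convex and superlinear (H3), it must then drop by an arbitrarily large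
amount on a cap of that cone away from the vertex. The `c`-monotonicity of `∂^c f` turns this drop
into the statement that the transport map sends the whole cap
`{x : ⟪v, x - u⟫ ≥ a, ‖x - u‖ ≤ r}` beyond any given radius, so its `Q`-mass is at most `ε` plus
a tail of `P`. Letting the caps exhaust a half-space, along a convergent subsequence of directions
`v`, bounds the mass of an open half-space at `u` by `ε`; since `Q` does not charge hyperplanes,
the Tukey depth is at most `ε`.
-/

open Filter MeasureTheory Bornology Topology Set
open scoped RealInnerProductSpace ENNReal BigOperators Classical

noncomputable section

abbrev Euc (d : ℕ) := EuclideanSpace ℝ (Fin d)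

/-- The cost function `c(x,y) = h(x-y)`. -/
def cost {d : ℕ} (h : Euc d → ℝ) (x y : Euc d) : ℝ := h (x - y)

/-- The truncated cone `Cone(r, θ, z, p)`. -/
def TruncCone {d : ℕ} (r θ : ℝ) (z p : Euc d) : Set (Euc d) :=
  {x | ‖x - p‖ * ‖z‖ * Real.cos (θ / 2) ≤ ⟪z, x - p⟫ ∧ ⟪z, x - p⟫ ≤ r * ‖z‖}

/-- (H1): `h` is strictly convex. -/
def H1 {d : ℕ} (h : Euc d → ℝ) : Prop := StrictConvexOn ℝ Set.univ h

/-- (H2): for every height `r > 0` and angle `θ ∈ (0, π)` there is `M > 0` such that for every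
`p` with `‖p‖ > M` there is a truncated cone with vertex `p` on which `h` attains its maximum
at `p`. -/
def H2 {d : ℕ} (h : Euc d → ℝ) : Prop :=
  ∀ r : ℝ, 0 < r → ∀ θ : ℝ, θ ∈ Set.Ioo 0 Real.pi → ∃ M : ℝ, 0 < M ∧
    ∀ p : Euc d, M < ‖p‖ → ∃ z : Euc d, z ≠ 0 ∧ ∀ x ∈ TruncCone r θ z p, h x ≤ h p

/-- (H3): `h(x)/‖x‖ → ∞` as `‖x‖ → ∞`. -/
def H3 {d : ℕ} (h : Euc d → ℝ) : Prop :=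
  ∀ C : ℝ, ∃ R : ℝ, ∀ x : Euc d, R ≤ ‖x‖ → C * ‖x‖ ≤ h x

/-- A function `f : ℝ^d → ℝ ∪ {-∞}` is `c`-concave if it is an infimum of functions
`x ↦ c(x,y) - t` over a nonempty family `𝒯` of pairs `(y,t)`. -/
def IsCConcave {d : ℕ} (h : Euc d → ℝ) (f : Euc d → EReal) : Prop :=
  ∃ T : Set (Euc d × ℝ), T.Nonempty ∧
    ∀ x : Euc d, f x = ⨅ p ∈ T, ((cost h x p.1 - p.2 : ℝ) : EReal)

/-- The `c`-superdifferential of `f`, as a subset of `ℝ^d × ℝ^d`. -/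
def CSuperdiff {d : ℕ} (h : Euc d → ℝ) (f : Euc d → EReal) : Set (Euc d × Euc d) :=
  {q | ∀ z : Euc d, f z ≤ f q.1 + ((cost h z q.2 - cost h q.1 q.2 : ℝ) : EReal)}

/-- `∂^c f(x)`. -/
def CSuperdiffAt {d : ℕ} (h : Euc d → ℝ) (f : Euc d → EReal) (x : Euc d) : Set (Euc d) :=
  {y | (x, y) ∈ CSuperdiff h f}

/-- `∂^c f(U) = ⋃_{x ∈ U} ∂^c f(x)`. -/
def CSuperdiffImg {d : ℕ} (h : Euc d → ℝ) (f : Euc d → EReal) (U : Set (Euc d)) :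
    Set (Euc d) :=
  ⋃ x ∈ U, CSuperdiffAt h f x

/-- `dom(f) = {x : f(x) > -∞}`. -/
def edom {d : ℕ} (f : Euc d → EReal) : Set (Euc d) := {x | f x ≠ ⊥}

/-- A sequence of sets escapes to the horizon if it eventually avoids every ball
`B_R(0)`. -/
def EscapesToHorizon {α : Type*} [Norm α] (A : ℕ → Set α) : Prop :=
  ∀ R : ℝ, 0 < R → ∃ N : ℕ, ∀ n, N ≤ n → ∀ a ∈ A n, R ≤ ‖a‖

/-- No subsequence of the sequence of sets escapes to the horizon. -/
def NoSubseqEscapes {α : Type*} [Norm α] (A : ℕ → Set α) : Prop :=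
  ∀ φ : ℕ → ℕ, StrictMono φ → ¬ EscapesToHorizon fun k => A (φ k)

/-- A Kantorovich potential for `(Q, P')`: a `c`-concave function `f` whose `c`-superdifferential
is `Q`-a.e. a singleton `{T x}` and whose (a.e. defined) selection `T` pushes `Q` forward
to `P'`. -/
def IsKantorovichPotential {d : ℕ} (h : Euc d → ℝ) (Q P' : Measure (Euc d))
    (f : Euc d → EReal) : Prop :=
  IsCConcave h f ∧ ∃ T : Euc d → Euc d,
    (∀ᵐ x ∂Q, CSuperdiffAt h f x = {T x}) ∧ Measure.map T Q = P'

/-- The Tukey depth `TD(u;Q) = inf_{v ∈ S^{d-1}} Q {x : ⟨v, x-u⟩ ≤ 0}`. -/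
def tukeyDepth {d : ℕ} (Q : Measure (Euc d)) (u : Euc d) : ℝ≥0∞ :=
  ⨅ v ∈ {v : Euc d | ‖v‖ = 1}, Q {x | ⟪v, x - u⟫ ≤ 0}

/-- The set `S_ε(u)` of possible values at `u` of `c`-superdifferentials of Kantorovich
potentials from `Q` to an `ε`-contamination of `P`. -/
def contamSet {d : ℕ} (h : Euc d → ℝ) (Q P : Measure (Euc d)) (ε : ℝ) (u : Euc d) :
    Set (Euc d) :=
  {y | ∃ μ : Measure (Euc d), IsProbabilityMeasure μ ∧ ∃ f : Euc d → EReal,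
    IsKantorovichPotential h Q (ENNReal.ofReal (1 - ε) • P + ENNReal.ofReal ε • μ) f ∧
    y ∈ CSuperdiffAt h f u}

/-- Breakdown point `BP(u) = inf {ε ∈ (0,1) : S_ε(u) is unbounded}`. -/
def breakdownPoint {d : ℕ} (h : Euc d → ℝ) (Q P : Measure (Euc d)) (u : Euc d) : ℝ≥0∞ :=
  ⨅ ε ∈ {ε : ℝ | 0 < ε ∧ ε < 1 ∧ ¬ IsBounded (contamSet h Q P ε u)}, ENNReal.ofReal ε

/-- `σ` is an optimal assignment for source points `u` and target points `x`. -/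
def IsOptAssign {d n : ℕ} (h : Euc d → ℝ) (u x : Fin n → Euc d)
    (σ : Equiv.Perm (Fin n)) : Prop :=
  ∀ τ : Equiv.Perm (Fin n), ∑ i, cost h (u i) (x (σ i)) ≤ ∑ i, cost h (u i) (x (τ i))

/-- The dataset `x'` shares at least `k` atoms (with multiplicity) with the dataset `x`
of distinct points. -/
def SharesAtoms {d n : ℕ} (x x' : Fin n → Euc d) (k : ℕ) : Prop :=
  ∃ s : Finset (Fin n), k ≤ s.card ∧ ∃ g : Fin n → Fin n,
    Set.InjOn g ↑s ∧ ∀ i ∈ s, x' (g i) = x i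

/-- The set of values `x'_{σ(j)}` over datasets `x'` sharing at least `n - ℓ` atoms with `x`
and optimal assignments `σ` for `(u, x')`. -/
def fsBadSet {d n : ℕ} (h : Euc d → ℝ) (u x : Fin n → Euc d) (j : Fin n) (ℓ : ℕ) :
    Set (Euc d) :=
  {y | ∃ (x' : Fin n → Euc d) (σ : Equiv.Perm (Fin n)),
    SharesAtoms x x' (n - ℓ) ∧ IsOptAssign h u x' σ ∧ y = x' (σ j)}

/-- Finite sample (replacement) breakdown point of `T_{Q_n → P_n}(u_j)`. -/
def finiteSampleBP {d n : ℕ} (h : Euc d → ℝ) (u x : Fin n → Euc d) (j : Fin n) : ℝ :=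
  ((sInf {ℓ : ℕ | 1 ≤ ℓ ∧ ℓ ≤ n ∧ ¬ IsBounded (fsBadSet h u x j ℓ)} : ℕ) : ℝ) / n

/-- Tukey depth of `a` with respect to the empirical measure of `u_1, …, u_n`. -/
def empTD {d n : ℕ} (u : Fin n → Euc d) (a : Euc d) : ℝ :=
  ⨅ v : {v : Euc d // ‖v‖ = 1},
    ((Finset.univ.filter fun i => ⟪(v : Euc d), u i - a⟫ ≤ 0).card : ℝ) / n

/-- Lower Tukey depth of `a` with respect to the empirical measure of `u_1, …, u_n`. -/
def empTDlt {d n : ℕ} (u : Fin n → Euc d) (a : Euc d) : ℝ :=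
  ⨅ v : {v : Euc d // ‖v‖ = 1},
    ((Finset.univ.filter fun i => ⟪(v : Euc d), u i - a⟫ < 0).card : ℝ) / n

/-- Points in general position: every subset of cardinality at most `d+1` is affinely
independent. -/
def InGeneralPosition {d n : ℕ} (u : Fin n → Euc d) : Prop :=
  ∀ s : Finset (Fin n), s.card ≤ d + 1 → AffineIndependent ℝ fun i : s => u (i : Fin n)

/-- Convex conjugate `h*(y) = sup_x (⟨x,y⟩ - h(x))`. -/
def convConj {d : ℕ} (h : Euc d → ℝ) (y : Euc d) : ℝ := ⨆ x : Euc d, (⟪x, y⟫ - h x)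

/-- Topological support of a measure. -/
def measSupport {d : ℕ} (Q : Measure (Euc d)) : Set (Euc d) :=
  {x | ∀ U : Set (Euc d), IsOpen U → x ∈ U → 0 < Q U}

/-- A set `Γ ⊂ ℝ^d × ℝ^d` is `c`-cyclically monotone. -/
def CCyclMono {d : ℕ} (h : Euc d → ℝ) (Γ : Set (Euc d × Euc d)) : Prop :=
  ∀ (N : ℕ) (p : Fin N → Euc d × Euc d), (∀ i, p i ∈ Γ) →
    ∀ τ : Equiv.Perm (Fin N),
      ∑ i, cost h (p i).1 (p i).2 ≤ ∑ i, cost h (p i).1 (p (τ i)).2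

theorem ConvexOn.mul_sub_apply_zero_le_sub {E : Type*} [AddCommGroup E] [Module ℝ E]
    {h : E → ℝ} (hh : ConvexOn ℝ univ h) (q : E) {s : ℝ} (hs : 0 ≤ s) :
    s * (h q - h 0) ≤ h ((1 + s) • q) - h q := by
  have hs1 : 0 < 1 + s := by linarith
  have hq : (1 / (1 + s)) • ((1 + s) • q) + (s / (1 + s)) • (0 : E) = q := by
    rw [smul_smul, smul_zero, add_zero, one_div_mul_cancel hs1.ne', one_smul]
  have hconv := hh.2 (mem_univ ((1 + s) • q)) (mem_univ 0)
    (by positivity : (0 : ℝ) ≤ 1 / (1 + s)) (by positivity : (0 : ℝ) ≤ s / (1 + s))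
    (by field_simp)
  rw [hq, smul_eq_mul, smul_eq_mul] at hconv
  have := mul_le_mul_of_nonneg_left hconv hs1.le
  field_simp at this
  linarith

theorem mem_cone_add_of_norm_le {E : Type*} [NormedAddCommGroup E] [InnerProductSpace ℝ E]
    {v w e : E} {a r : ℝ} (hv : ‖v‖ = 1) (ha : 0 < a) (hw : a ≤ ⟪v, w⟫) (hwr : ‖w‖ ≤ r)
    (he : ‖e‖ ≤ a / 2) :
    a / (2 * r + a) * ‖w + e‖ ≤ ⟪v, w + e⟫ ∧ ⟪v, w + e⟫ ≤ r + a / 2 := by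
  have hve : |⟪v, e⟫| ≤ a / 2 := (abs_real_inner_le_norm v e).trans (by rw [hv, one_mul]; exact he)
  have hvw : ⟪v, w + e⟫ ≤ ‖w + e‖ := (real_inner_le_norm v _).trans_eq (by rw [hv, one_mul])
  have hr : a ≤ r := hw.trans ((real_inner_le_norm v w).trans (by rw [hv, one_mul]; exact hwr))
  have hwe : ‖w + e‖ ≤ r + a / 2 := (norm_add_le w e).trans (add_le_add hwr he)
  have hra : 0 < 2 * r + a := by linarith
  rw [inner_add_right] at hvw ⊢
  refine ⟨?_, by linarith [le_abs_self ⟪v, e⟫]⟩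
  calc a / (2 * r + a) * ‖w + e‖ ≤ a / (2 * r + a) * (r + a / 2) := by gcongr
    _ = a / 2 := by field_simp
    _ ≤ ⟪v, w⟫ + ⟪v, e⟫ := by linarith [neg_abs_le ⟪v, e⟫]

theorem H2.exists_unit_cone {d : ℕ} {h : Euc d → ℝ} (h2 : H2 h) {κ H : ℝ} (hκ0 : 0 < κ)
    (hκ1 : κ < 1) (hH : 0 < H) :
    ∃ M : ℝ, ∀ p : Euc d, M < ‖p‖ → ∃ v : Euc d, ‖v‖ = 1 ∧
      ∀ w : Euc d, κ * ‖w‖ ≤ ⟪v, w⟫ → ⟪v, w⟫ ≤ H → h (p + w) ≤ h p := by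
  have hθ : 2 * Real.arccos κ ∈ Ioo 0 Real.pi := by
    constructor
    · linarith [Real.arccos_pos.2 hκ1]
    · linarith [Real.arccos_lt_pi_div_two.2 hκ0]
  have hcos : Real.cos (2 * Real.arccos κ / 2) = κ := by
    rw [mul_div_cancel_left₀ _ two_ne_zero, Real.cos_arccos (by linarith) hκ1.le]
  obtain ⟨M, -, hM⟩ := h2 H hH _ hθ
  refine ⟨M, fun p hp => ?_⟩
  obtain ⟨z, hz, hzmax⟩ := hM p hp
  have hz' : 0 < ‖z‖ := norm_pos_iff.2 hz
  refine ⟨‖z‖⁻¹ • z, by rw [norm_smul, norm_inv, norm_norm, inv_mul_cancel₀ hz'.ne'],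
    fun w hw hwH => hzmax _ ?_⟩
  rw [real_inner_smul_left] at hw hwH
  have hzw : ⟪z, w⟫ = ‖z‖ * (‖z‖⁻¹ * ⟪z, w⟫) := by field_simp
  simp only [TruncCone, mem_ofPred_eq, add_sub_cancel_left, hcos]
  constructor
  · rw [hzw]; nlinarith
  · rw [hzw]; nlinarith

theorem H2.exists_apply_add_add_lt {d : ℕ} {h : Euc d → ℝ} (h2 : H2 h)
    (hconv : ConvexOn ℝ univ h) (h3 : H3 h) (G : ℝ) {a r : ℝ} (ha : 0 < a) (hr : 0 < r) :
    ∃ R : ℝ, ∀ p : Euc d, R ≤ ‖p‖ → ∃ v : Euc d, ‖v‖ = 1 ∧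
      ∀ w : Euc d, a ≤ ⟪v, w⟫ → ‖w‖ ≤ r → h (p + w) + G < h p := by
  obtain ⟨M, hM⟩ := h2.exists_unit_cone (κ := a / (2 * r + a)) (H := r + a / 2)
    (by positivity) ((div_lt_one (by positivity)).2 (by linarith)) (by positivity)
  set C := (G + 1) / (a / 2) + |h 0| with hC
  obtain ⟨R₀, hR₀⟩ := h3 C
  refine ⟨max (M + 1) (max R₀ 1 + r), fun p hp => ?_⟩
  obtain ⟨v, hv, hcone⟩ := hM p (by linarith [le_max_left (M + 1) (max R₀ 1 + r)])
  refine ⟨v, hv, fun w hw hwr => ?_⟩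
  set q := p + w
  have hq : max R₀ 1 ≤ ‖q‖ := by
    have := norm_sub_norm_le p (-w)
    rw [sub_neg_eq_add, norm_neg] at this
    linarith [le_max_right (M + 1) (max R₀ 1 + r)]
  have hq1 : 1 ≤ ‖q‖ := (le_max_right _ _).trans hq
  -- `h ≤ h p` on the ball of radius `a / 2` around `q`, in particular at `(1 + s) • q`.
  set s := a / 2 / ‖q‖
  have hs : s * ‖q‖ = a / 2 := div_mul_cancel₀ _ (by positivity)
  have hball : h ((1 + s) • q) ≤ h p := by
    have hsq : ‖s • q‖ ≤ a / 2 := by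
      rw [norm_smul, Real.norm_of_nonneg (by positivity), hs]
    obtain ⟨h₁, h₂⟩ := mem_cone_add_of_norm_le hv ha hw hwr hsq
    rw [add_smul, one_smul, add_assoc]
    exact hcone _ h₁ h₂
  have hslope := hconv.mul_sub_apply_zero_le_sub q (s := s) (by positivity)
  have hgrowth : G + 1 ≤ s * (h q - h 0) := by
    have hCq := hR₀ q ((le_max_left _ _).trans hq)
    have h0 : h 0 ≤ |h 0| * ‖q‖ := (le_abs_self _).trans (le_mul_of_one_le_right (abs_nonneg _) hq1)
    calc G + 1 = (C - |h 0|) * (s * ‖q‖) := by rw [hC, hs]; field_simp; ring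
      _ = s * ((C - |h 0|) * ‖q‖) := by ring
      _ ≤ s * (h q - h 0) := by gcongr; nlinarith
  linarith

theorem IsCConcave.ne_top {d : ℕ} {h : Euc d → ℝ} {f : Euc d → EReal} (hf : IsCConcave h f)
    (x : Euc d) : f x ≠ ⊤ := by
  obtain ⟨T, ⟨p, hp⟩, hfT⟩ := hf
  rw [hfT x]
  exact ne_top_of_le_ne_top (EReal.coe_ne_top _) (iInf₂_le p hp)

theorem IsKantorovichPotential.ne_bot_of_mem_cSuperdiffAt {d : ℕ} [Nontrivial (Euc d)]
    {h : Euc d → ℝ} {Q P' : Measure (Euc d)} [NeZero Q] {f : Euc d → EReal}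
    (hf : IsKantorovichPotential h Q P' f) {x y : Euc d} (hy : y ∈ CSuperdiffAt h f x) :
    f x ≠ ⊥ := by
  intro hx
  -- `f ≡ -∞` would make every `c`-superdifferential the whole space.
  have hall : ∀ x', CSuperdiffAt h f x' = univ := fun x' => eq_univ_of_forall fun y' z => by
    have hz := hy z
    rw [hx, EReal.bot_add, le_bot_iff] at hz
    simp [hz]
  obtain ⟨-, T, hsing, -⟩ := hf
  obtain ⟨x', hx'⟩ := hsing.exists
  exact (nontrivial_univ (α := Euc d)).ne_singleton ((hall x').symm.trans hx')

theorem cost_add_cost_le_of_mem_cSuperdiffAt {d : ℕ} {h : Euc d → ℝ} {f : Euc d → EReal}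
    {u x y y' : Euc d} (hu : f u ≠ ⊥) (hu' : f u ≠ ⊤) (hy : y ∈ CSuperdiffAt h f u)
    (hy' : y' ∈ CSuperdiffAt h f x) :
    cost h u y + cost h x y' ≤ cost h x y + cost h u y' := by
  have h₁ := hy x
  have h₂ := hy' u
  simp only at h₁ h₂
  rw [← EReal.coe_toReal hu' hu] at h₁ h₂
  generalize f x = t at h₁ h₂
  induction t using EReal.rec with
  | bot => simp at h₂
  | top =>
    rw [← EReal.coe_add, top_le_iff] at h₁
    exact absurd h₁ (EReal.coe_ne_top _)
  | coe b =>
    rw [← EReal.coe_add, EReal.coe_le_coe_iff] at h₁ h₂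
    linarith

theorem exists_measure_norm_gt_le {E : Type*} [NormedAddCommGroup E] [CompleteSpace E]
    [SecondCountableTopology E] [MeasurableSpace E] [BorelSpace E] (P : Measure E)
    [IsFiniteMeasure P] {η : ℝ≥0∞} (hη : 0 < η) : ∃ L : ℝ, P {y | L < ‖y‖} ≤ η := by
  have htail := tendsto_measure_norm_gt_of_isTightMeasureSet (isTightMeasureSet_singleton (μ := P))
  simp only [mem_singleton_iff, iSup_iSup_eq_left] at htail
  exact (htail.eventually (ge_mem_nhds hη)).exists

theorem measure_preimage_le_of_map_eq_contamination {α β : Type*} [MeasurableSpace α]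
    [MeasurableSpace β] {Q : Measure α} {P μ : Measure β} [IsProbabilityMeasure μ] {T : α → β}
    {ε : ℝ} (hε : 0 < ε) (hmap : Q.map T = ENNReal.ofReal (1 - ε) • P + ENNReal.ofReal ε • μ)
    (s : Set β) : Q (T ⁻¹' s) ≤ ENNReal.ofReal ε + P s := by
  have hT : AEMeasurable T Q := by
    by_contra hT
    rw [Measure.map_of_not_aemeasurable hT] at hmap
    have h0 := congrArg (fun ν : Measure β => ν univ) hmap
    simp only [Measure.coe_zero, Pi.zero_apply, Measure.add_apply, Measure.smul_apply,
      measure_univ, smul_eq_mul, mul_one] at h0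
    exact (ENNReal.ofReal_pos.2 hε).ne' (add_eq_zero.1 h0.symm).2
  calc Q (T ⁻¹' s) ≤ Q.map T s := Measure.le_map_apply hT s
    _ = ENNReal.ofReal (1 - ε) * P s + ENNReal.ofReal ε * μ s := by
      rw [hmap, Measure.add_apply, Measure.smul_apply, Measure.smul_apply, smul_eq_mul,
        smul_eq_mul]
    _ ≤ 1 * P s + ENNReal.ofReal ε * 1 := by
      gcongr
      · exact ENNReal.ofReal_le_one.2 (by linarith)
      · exact prob_le_one
    _ = ENNReal.ofReal ε + P s := by rw [one_mul, mul_one, add_comm]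

theorem measure_cap_le_of_not_isBounded_contamSet {d : ℕ} {h : Euc d → ℝ}
    (hpos : ∀ x, 0 ≤ h x) (hconv : ConvexOn ℝ univ h) (h2 : H2 h) (h3 : H3 h)
    (Q P : Measure (Euc d)) [NeZero Q] [IsFiniteMeasure P] {u : Euc d} {ε : ℝ} (hε : 0 < ε)
    (hunb : ¬ IsBounded (contamSet h Q P ε u)) {a r : ℝ} (ha : 0 < a) (hr : 0 < r)
    {η : ℝ≥0∞} (hη : 0 < η) :
    ∃ v : Euc d, ‖v‖ = 1 ∧
      Q {x | a ≤ ⟪v, x - u⟫ ∧ ‖x - u‖ ≤ r} ≤ ENNReal.ofReal ε + η := by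
  obtain ⟨L, hL⟩ := exists_measure_norm_gt_le P hη
  have hcont : Continuous h := continuousOn_univ.1 (hconv.continuousOn isOpen_univ)
  obtain ⟨CL, hCL⟩ := (isCompact_closedBall u L).bddAbove_image hcont.continuousOn
  obtain ⟨R, hR⟩ := h2.exists_apply_add_add_lt hconv h3 CL ha hr
  rw [isBounded_iff_forall_norm_le] at hunb
  push Not at hunb
  obtain ⟨y, ⟨μ, hμ, f, hf, hyu⟩, hy⟩ := hunb (max R 0 + ‖u‖)
  have hy0 : y ≠ 0 :=
    norm_pos_iff.1 ((add_nonneg (le_max_right R 0) (norm_nonneg u)).trans_lt hy)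
  have : Nontrivial (Euc d) := nontrivial_of_ne y 0 hy0
  have hp : R ≤ ‖u - y‖ := by
    have := norm_sub_norm_le y u
    rw [norm_sub_rev] at this
    linarith [le_max_left R 0]
  obtain ⟨v, hv, hdrop⟩ := hR (u - y) hp
  refine ⟨v, hv, ?_⟩
  have hfu := hf.ne_bot_of_mem_cSuperdiffAt hyu
  obtain ⟨hconc, T, hsing, hmap⟩ := hf
  -- `c`-monotonicity on `(u, y), (x, T x)` and the drop of `h` give `h (u - T x) > CL`.
  have hfar : {x | a ≤ ⟪v, x - u⟫ ∧ ‖x - u‖ ≤ r} ≤ᵐ[Q] T ⁻¹' {y' | L < ‖y'‖} := by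
    filter_upwards [hsing] with x hx ⟨hxa, hxr⟩
    have hmono := cost_add_cost_le_of_mem_cSuperdiffAt hfu (hconc.ne_top u) hyu
      (hx.symm ▸ mem_singleton (T x))
    have hlt := hdrop (x - u) hxa hxr
    rw [sub_add_sub_cancel'] at hlt
    simp only [cost] at hmono
    by_contra hTx
    have hTx' : h (u - T x) ≤ CL :=
      hCL ⟨u - T x, by simpa [dist_eq_norm] using not_lt.1 hTx, rfl⟩
    linarith [hpos (x - T x)]
  calc Q {x | a ≤ ⟪v, x - u⟫ ∧ ‖x - u‖ ≤ r} ≤ Q (T ⁻¹' {y' | L < ‖y'‖}) := measure_mono_ae hfar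
    _ ≤ ENNReal.ofReal ε + P {y' | L < ‖y'‖} :=
      measure_preimage_le_of_map_eq_contamination hε hmap _
    _ ≤ ENNReal.ofReal ε + η := by gcongr

theorem exists_measure_inner_sub_pos_le {E : Type*} [NormedAddCommGroup E]
    [InnerProductSpace ℝ E] [FiniteDimensional ℝ E] [MeasurableSpace E] (Q : Measure E) (u : E)
    {b : ℝ≥0∞}
    (hcap : ∀ n : ℕ, ∃ v : E, ‖v‖ = 1 ∧
      Q {x | 1 / ((n : ℝ) + 1) ≤ ⟪v, x - u⟫ ∧ ‖x - u‖ ≤ (n : ℝ) + 1} ≤ b) :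
    ∃ v : E, ‖v‖ = 1 ∧ Q {x | 0 < ⟪v, x - u⟫} ≤ b := by
  choose V hV hVQ using hcap
  obtain ⟨v, hv, φ, hφ, hVφ⟩ := (isCompact_sphere (0 : E) 1).tendsto_subseq
    (x := V) fun n => mem_sphere_zero_iff_norm.2 (hV n)
  set A : ℕ → Set E := fun n =>
    {x | 1 / ((n : ℝ) + 1) ≤ ⟪V n, x - u⟫ ∧ ‖x - u‖ ≤ (n : ℝ) + 1}
  set B : ℕ → Set E := fun m => ⋂ j ≥ m, A (φ j)
  have hB : Monotone B := fun m m' hm => biInter_mono (fun j hj => hm.trans hj) fun _ _ => le_rfl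
  have hsub : {x | 0 < ⟪v, x - u⟫} ⊆ ⋃ m, B m := fun x hx => by
    have hN : Tendsto (fun j => (φ j : ℝ) + 1) atTop atTop :=
      tendsto_atTop_add_const_right _ 1 (tendsto_natCast_atTop_atTop.comp hφ.tendsto_atTop)
    have h₁ : ∀ᶠ j in atTop, ⟪v, x - u⟫ / 2 < ⟪V (φ j), x - u⟫ :=
      (hVφ.inner tendsto_const_nhds).eventually (lt_mem_nhds (half_lt_self hx))
    have h₂ : ∀ᶠ j in atTop, 1 / ((φ j : ℝ) + 1) < ⟪v, x - u⟫ / 2 := by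
      filter_upwards [hN.inv_tendsto_atTop.eventually (gt_mem_nhds (half_pos hx))] with j hj
      rw [one_div]; exact hj
    obtain ⟨m, hm⟩ := eventually_atTop.1 (h₁.and (h₂.and (hN.eventually_ge_atTop ‖x - u‖)))
    exact mem_iUnion.2 ⟨m, mem_iInter₂.2 fun j hj =>
      ⟨((hm j hj).2.1.trans (hm j hj).1).le, (hm j hj).2.2⟩⟩
  refine ⟨v, mem_sphere_zero_iff_norm.1 hv, ?_⟩
  calc Q {x | 0 < ⟪v, x - u⟫} ≤ Q (⋃ m, B m) := measure_mono hsub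
    _ = ⨆ m, Q (B m) := hB.measure_iUnion
    _ ≤ b := iSup_le fun m => (measure_mono (biInter_subset_of_mem le_rfl)).trans (hVQ (φ m))

theorem measure_inner_sub_eq_zero {E : Type*} [NormedAddCommGroup E] [InnerProductSpace ℝ E]
    [FiniteDimensional ℝ E] [MeasurableSpace E] [BorelSpace E] {μ : Measure E}
    [μ.IsAddHaarMeasure] {Q : Measure E} (hQ : Q ≪ μ) {v : E} (hv : v ≠ 0) (u : E) :
    Q {x | ⟪v, x - u⟫ = 0} = 0 := by
  refine hQ ?_
  have hplane : {x : E | ⟪v, x - u⟫ = 0} = AffineSubspace.mk' u (ℝ ∙ v)ᗮ := by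
    ext x
    rw [SetLike.mem_coe, AffineSubspace.mem_mk', vsub_eq_sub,
      Submodule.mem_orthogonal_singleton_iff_inner_right]
    rfl
  rw [hplane]
  refine Measure.addHaar_affineSubspace _ _ fun htop => hv ?_
  have hmem : u + v ∈ AffineSubspace.mk' u (ℝ ∙ v)ᗮ := htop ▸ AffineSubspace.mem_top ℝ E _
  rwa [AffineSubspace.mem_mk', vsub_eq_sub, add_sub_cancel_left,
    Submodule.mem_orthogonal_singleton_iff_inner_right, inner_self_eq_zero] at hmem

theorem tukeyDepth_le_measure_inner_sub_pos {d : ℕ} {Q : Measure (Euc d)} (hQ : Q ≪ volume)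
    (u : Euc d) {v : Euc d} (hv : ‖v‖ = 1) : tukeyDepth Q u ≤ Q {x | 0 < ⟪v, x - u⟫} := by
  have hsub : {x | ⟪-v, x - u⟫ ≤ 0} ⊆ {x | 0 < ⟪v, x - u⟫} ∪ {x | ⟪v, x - u⟫ = 0} :=
    fun x hx => by
      simp only [mem_ofPred_eq, inner_neg_left, neg_nonpos] at hx
      exact hx.lt_or_eq'
  calc tukeyDepth Q u ≤ Q {x | ⟪-v, x - u⟫ ≤ 0} := iInf₂_le (-v) (by simp [hv])
    _ ≤ Q {x | 0 < ⟪v, x - u⟫} + Q {x | ⟪v, x - u⟫ = 0} :=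
      (measure_mono hsub).trans (measure_union_le _ _)
    _ = Q {x | 0 < ⟪v, x - u⟫} := by
      rw [measure_inner_sub_eq_zero hQ (norm_ne_zero_iff.1 (by simp [hv])) u, add_zero]

theorem breakdown_ge_tukeyDepth_general (d : ℕ) (h : Euc d → ℝ)
    (hpos : ∀ x, 0 ≤ h x) (h1 : H1 h) (h2 : H2 h) (h3 : H3 h)
    (Q P : Measure (Euc d)) [IsProbabilityMeasure Q] [IsProbabilityMeasure P]
    (hQ : Q ≪ volume) (u : Euc d) :
    tukeyDepth Q u ≤ breakdownPoint h Q P u := by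
  refine le_iInf₂ fun ε ⟨hε, _, hunb⟩ => ENNReal.le_of_forall_pos_le_add fun η hη _ => ?_
  obtain ⟨v, hv, hvQ⟩ := exists_measure_inner_sub_pos_le Q u fun n =>
    measure_cap_le_of_not_isBounded_contamSet hpos h1.convexOn h2 h3 Q P hε hunb
      (by positivity) (by positivity) (ENNReal.coe_pos.2 hη)
  exact (tukeyDepth_le_measure_inner_sub_pos hQ u hv).trans hvQ

/-- under (H1)-(H3) and `Q ≪ Leb`, the breakdown point of the optimal transport
map at any `u` is at least the Tukey depth of `u` w.r.t. `Q`. -/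
theorem breakdown_ge_tukeyDepth (d : ℕ) (hd : 1 ≤ d) (h : Euc d → ℝ)
    (hpos : ∀ x, 0 ≤ h x) (h1 : H1 h) (h2 : H2 h) (h3 : H3 h)
    (Q P : Measure (Euc d)) [IsProbabilityMeasure Q] [IsProbabilityMeasure P]
    (hQ : Q ≪ volume) (u : Euc d) :
    tukeyDepth Q u ≤ breakdownPoint h Q P u :=
  breakdown_ge_tukeyDepth_general d h hpos h1 h2 h3 Q P hQ u

end
end

section
/- Assume the cost c(x,y) = h(x−y) satisfies (H1)–(H3). Let u_1,…,u_n ∈ ℝ^d be distinct and x_1,…,x_n ∈ ℝ^d be distinct, with Q_n the empirical measure of u_1,…,u_n. Then for every i ∈ {1,…,n}, the finite sample breakdown point of T_{Q_n→P_n}(u_i) is at least TD^−(u_i;Q_n) + 1/n. -/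
open Filter MeasureTheory Bornology Topology Set
open scoped RealInnerProductSpace ENNReal BigOperators Classical

noncomputable section

/-!
Let `ℓ` be the breakdown index: after replacing `ℓ` target points, optimal assignments can send
`u_i` arbitrarily far. Far from the origin, (H2) gives a truncated cone with vertex
`p = u_i - x'_{σ(i)}`, opening to almost a half-space, on which `h` is maximal at `p`; let `w` be a
limit of the unit axes of these cones. If `⟪w, u_j - u_i⟫ > 0`, then a ball around
`u_j - x'_{σ(i)} = p + (u_j - u_i)` lies in the cone, and convexity of `h` along the ray from `0`
through that point, together with the superlinear growth (H3), makes `h (u_j - x'_{σ(i)})` much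
smaller than `h p`. If `x'_{σ(j)}` stayed bounded, swapping the targets of `i` and `j` would
then lower the cost. So `x'_{σ(j)}` is far as well, hence one of the replaced points, and the open
half-space `{y | ⟪-w, y - u_i⟫ < 0}` contains fewer than `ℓ` of the `u_j`.
-/

open Finset Metric

lemma IsOptAssign.add_le_swap {d n : ℕ} {h : Euc d → ℝ} {u x' : Fin n → Euc d}
    {σ : Equiv.Perm (Fin n)} (hopt : IsOptAssign h u x' σ) (i j : Fin n) :
    cost h (u i) (x' (σ i)) + cost h (u j) (x' (σ j)) ≤
      cost h (u i) (x' (σ j)) + cost h (u j) (x' (σ i)) := by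
  rcases eq_or_ne i j with rfl | hij
  · exact le_rfl
  have key := hopt (σ * Equiv.swap i j)
  rw [← sub_nonneg, ← Finset.sum_sub_distrib, Fintype.sum_eq_add i j hij] at key
  · simp only [Equiv.Perm.mul_apply, Equiv.swap_apply_left, Equiv.swap_apply_right] at key
    linarith
  · rintro k ⟨hki, hkj⟩
    rw [Equiv.Perm.mul_apply, Equiv.swap_apply_of_ne_of_ne hki hkj, sub_self]

lemma SharesAtoms.card_far_add_le {d n k : ℕ} {x x' : Fin n → Euc d} (hsh : SharesAtoms x x' k)
    {B : ℝ} (hB : ∀ j, ‖x j‖ ≤ B) (σ : Equiv.Perm (Fin n)) :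
    #{j | B < ‖x' (σ j)‖} + k ≤ n := by
  obtain ⟨s, hk, g, hg, hgx⟩ := hsh
  have hnear : s.image (σ.symm ∘ g) ⊆ ({j | ¬ B < ‖x' (σ j)‖} : Finset (Fin n)) := by
    intro j hj
    obtain ⟨a, ha, rfl⟩ := Finset.mem_image.1 hj
    simpa [hgx a ha] using hB a
  have hcard := Finset.card_le_card hnear
  rw [Finset.card_image_of_injOn (σ.symm.injective.comp_injOn hg)] at hcard
  have := Finset.card_filter_add_card_filter_not (s := Finset.univ) fun j => B < ‖x' (σ j)‖
  simp only [Finset.card_univ, Fintype.card_fin] at this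
  omega

lemma fsBadSet_eq_univ {d n ℓ : ℕ} (h : Euc d → ℝ) (u x : Fin n → Euc d) (j : Fin n)
    (hℓ : n ≤ ℓ) : fsBadSet h u x j ℓ = univ :=
  eq_univ_of_forall fun y => ⟨fun _ => y, 1,
    ⟨∅, by simp [Nat.sub_eq_zero_of_le hℓ], id, by simp, by simp⟩, fun _ => le_rfl, rfl⟩

lemma empTDlt_le {d n : ℕ} (u : Fin n → Euc d) (a : Euc d) {v : Euc d} (hv : ‖v‖ = 1) :
    empTDlt u a ≤ #{j | ⟪v, u j - a⟫ < 0} / n :=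
  ciInf_le ⟨0, by rintro _ ⟨w, rfl⟩; positivity⟩ (⟨v, hv⟩ : {v : Euc d // ‖v‖ = 1})

lemma truncCone_smul {d : ℕ} {r θ c : ℝ} (hc : 0 < c) (z p : Euc d) :
    TruncCone r θ (c • z) p = TruncCone r θ z p := by
  ext y
  simp only [TruncCone, mem_ofPred_eq, norm_smul, real_inner_smul_left,
    Real.norm_of_nonneg hc.le]
  rw [show ‖y - p‖ * (c * ‖z‖) * Real.cos (θ / 2) = c * (‖y - p‖ * ‖z‖ * Real.cos (θ / 2)) by ring,
    show r * (c * ‖z‖) = c * (r * ‖z‖) by ring,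
    mul_le_mul_iff_of_pos_left hc, mul_le_mul_iff_of_pos_left hc]

lemma H2.exists_unit {d : ℕ} {h : Euc d → ℝ} (h2 : H2 h) {r θ : ℝ} (hr : 0 < r)
    (hθ : θ ∈ Ioo 0 Real.pi) :
    ∃ M : ℝ, ∀ p : Euc d, M < ‖p‖ →
      ∃ z : Euc d, ‖z‖ = 1 ∧ ∀ y ∈ TruncCone r θ z p, h y ≤ h p := by
  obtain ⟨M, -, hM⟩ := h2 r hr θ hθ
  refine ⟨M, fun p hp => ?_⟩
  obtain ⟨z, hz, hmax⟩ := hM p hp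
  refine ⟨(‖z‖⁻¹ : ℝ) • z, norm_smul_inv_norm hz, ?_⟩
  rwa [truncCone_smul (inv_pos.2 (norm_pos_iff.2 hz))]

lemma closedBall_subset_truncCone {d : ℕ} {r θ ρ : ℝ} {z p q : Euc d} (hz : ‖z‖ = 1)
    (hcos : 0 ≤ Real.cos (θ / 2))
    (hlow : (‖q - p‖ + ρ) * Real.cos (θ / 2) ≤ ⟪z, q - p⟫ - ρ) (hup : ⟪z, q - p⟫ + ρ ≤ r) :
    closedBall q ρ ⊆ TruncCone r θ z p := by
  intro y hy
  rw [mem_closedBall, dist_eq_norm] at hy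
  have hsplit : y - p = (q - p) + (y - q) := by abel
  have hinner : |⟪z, y - q⟫| ≤ ρ := by
    simpa [hz] using (abs_real_inner_le_norm z (y - q)).trans (by rw [hz, one_mul]; exact hy)
  have hnorm : ‖y - p‖ * Real.cos (θ / 2) ≤ (‖q - p‖ + ρ) * Real.cos (θ / 2) :=
    mul_le_mul_of_nonneg_right (hsplit ▸ norm_add_le_of_le le_rfl hy) hcos
  have hsplit_inner : ⟪z, y - p⟫ = ⟪z, q - p⟫ + ⟪z, y - q⟫ := by rw [hsplit, inner_add_right]
  simp only [TruncCone, mem_ofPred_eq, hz, mul_one, hsplit_inner]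
  constructor <;> linarith [abs_le.1 hinner]

lemma ConvexOn.mul_sub_le_of_le_on_closedBall {E : Type*} [NormedAddCommGroup E]
    [NormedSpace ℝ E] {f : E → ℝ} (hf : ConvexOn ℝ univ f) {x : E} {ρ A : ℝ} (hρ : 0 ≤ ρ)
    (hA : ∀ y ∈ closedBall x ρ, f y ≤ A) (a : E) :
    ρ * (f x - f a) ≤ ‖x - a‖ * (A - f x) := by
  rcases eq_or_ne x a with rfl | hxa
  · simp
  set s := ‖x - a‖
  have hs : 0 < s := norm_pos_iff.2 (sub_ne_zero.2 hxa)
  -- `x` divides the segment from `a` to the point `y` of the sphere `∂B(x, ρ)` in the ratio `ρ : s`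
  set y := x + (ρ / s) • (x - a)
  have hy : f y ≤ A := hA y <| by
    rw [mem_closedBall, dist_eq_norm, add_sub_cancel_left, norm_smul, Real.norm_of_nonneg
      (by positivity), div_mul_cancel₀ _ hs.ne']
  have hx : (ρ / (s + ρ)) • a + (s / (s + ρ)) • y = x := by
    simp only [y, smul_add, smul_sub, smul_smul]
    match_scalars
    · field_simp; ring
    · field_simp
  have hconv := hf.2 (mem_univ a) (mem_univ y) (by positivity : 0 ≤ ρ / (s + ρ))
    (by positivity : 0 ≤ s / (s + ρ))
    (by rw [← add_div, add_comm, div_self (by positivity)] : ρ / (s + ρ) + s / (s + ρ) = 1)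
  rw [hx, smul_eq_mul, smul_eq_mul, div_mul_eq_mul_div, div_mul_eq_mul_div, ← add_div,
    le_div_iff₀ (by positivity)] at hconv
  nlinarith

lemma exists_norm_lt_of_le_on_closedBall {d : ℕ} {h : Euc d → ℝ} (hconv : ConvexOn ℝ univ h)
    (h3 : H3 h) {D ρ : ℝ} (b : ℝ) (hD : 0 ≤ D) (hρ : 0 < ρ) :
    ∃ R : ℝ, ∀ p q : Euc d, ‖q - p‖ ≤ b → (∀ y ∈ closedBall q ρ, h y ≤ h p) →
      h p ≤ h q + D → ‖p‖ < R := by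
  obtain ⟨R₀, hR₀⟩ := h3 ((D + 1) / ρ)
  refine ⟨max R₀ (ρ * (h 0 + D) + b * D + 1), fun p q hqp hball hle => ?_⟩
  by_contra! hp
  have hgrowth : (D + 1) * ‖p‖ ≤ ρ * h p := by
    have := mul_le_mul_of_nonneg_left (hR₀ p (le_of_max_le_left hp)) hρ.le
    rwa [← mul_assoc, mul_div_cancel₀ _ hρ.ne'] at this
  have hsecant := hconv.mul_sub_le_of_le_on_closedBall hρ.le hball 0
  rw [sub_zero] at hsecant
  have hq : ‖q‖ ≤ ‖p‖ + b := by
    simpa only [add_sub_cancel] using norm_add_le_of_le (le_refl ‖p‖) hqp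
  have hdrop : ‖q‖ * (h p - h q) ≤ (‖p‖ + b) * D :=
    (mul_le_mul_of_nonneg_left (by linarith) (norm_nonneg q)).trans
      (mul_le_mul_of_nonneg_right hq hD)
  linarith [le_of_max_le_right hp, mul_le_mul_of_nonneg_left hle hρ.le]

lemma exists_add_lt_of_le_on_truncCone {d : ℕ} {h : Euc d → ℝ} (hconv : ConvexOn ℝ univ h)
    (h3 : H3 h) {D b m : ℝ} (hD : 0 ≤ D) (hm : 0 < m) {δ : Euc d} (hδ : ‖δ‖ ≤ b) :
    ∃ R : ℝ, ∀ (p z : Euc d) (θ : ℝ), R ≤ ‖p‖ → ‖z‖ = 1 → θ ∈ Ioo 0 Real.pi →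
      Real.cos (θ / 2) * (b + 1) ≤ m / 2 → m ≤ ⟪z, δ⟫ →
      (∀ y ∈ TruncCone (b + 1) θ z p, h y ≤ h p) → h (p + δ) + D < h p := by
  set ρ := min (m / 2) 1
  have hρ : 0 < ρ := lt_min (half_pos hm) one_pos
  obtain ⟨R, hR⟩ := exists_norm_lt_of_le_on_closedBall hconv h3 b hD hρ
  refine ⟨R, fun p z θ hp hz hθ hcos hzδ hmax => ?_⟩
  by_contra! hle
  have hcos0 : 0 ≤ Real.cos (θ / 2) :=
    Real.cos_nonneg_of_mem_Icc ⟨by linarith [hθ.1, Real.pi_pos], by linarith [hθ.2]⟩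
  have hzδ' : ⟪z, δ⟫ ≤ b := (real_inner_le_norm z δ).trans (by rw [hz, one_mul]; exact hδ)
  have hball : closedBall (p + δ) ρ ⊆ TruncCone (b + 1) θ z p := by
    refine closedBall_subset_truncCone hz hcos0 ?_ ?_ <;> rw [add_sub_cancel_left]
    · have := mul_le_mul_of_nonneg_left (add_le_add hδ (min_le_right (m / 2) 1)) hcos0
      linarith [min_le_left (m / 2) 1]
    · linarith [min_le_right (m / 2) 1]
  exact (hR p (p + δ) (by rwa [add_sub_cancel_left]) (fun y hy => hmax y (hball hy)) hle).not_ge hp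

lemma exists_optAssign_truncCone {d n ℓ : ℕ} {h : Euc d → ℝ} (h2 : H2 h) {u x : Fin n → Euc d}
    {i : Fin n} (hub : ¬ IsBounded (fsBadSet h u x i ℓ)) {r θ : ℝ} (hr : 0 < r)
    (hθ : θ ∈ Ioo 0 Real.pi) (R : ℝ) :
    ∃ (x' : Fin n → Euc d) (σ : Equiv.Perm (Fin n)) (z : Euc d),
      SharesAtoms x x' (n - ℓ) ∧ IsOptAssign h u x' σ ∧ R ≤ ‖u i - x' (σ i)‖ ∧ ‖z‖ = 1 ∧
      ∀ y ∈ TruncCone r θ z (u i - x' (σ i)), h y ≤ h (u i - x' (σ i)) := by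
  obtain ⟨M, hM⟩ := h2.exists_unit hr hθ
  obtain ⟨_, ⟨x', σ, hsh, hopt, rfl⟩, hfar⟩ : ∃ y ∈ fsBadSet h u x i ℓ, max M R + ‖u i‖ < ‖y‖ := by
    by_contra! hbdd
    exact hub (isBounded_iff_forall_norm_le.2 ⟨_, hbdd⟩)
  have hp : max M R < ‖u i - x' (σ i)‖ := by
    linarith [norm_sub_norm_le (x' (σ i)) (u i), norm_sub_rev (x' (σ i)) (u i)]
  obtain ⟨z, hz, hmax⟩ := hM _ ((le_max_left M R).trans_lt hp)
  exact ⟨x', σ, z, hsh, hopt, (le_max_right M R).trans hp.le, hz, hmax⟩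

lemma IsOptAssign.le_add_of_norm_le {d n : ℕ} {h : Euc d → ℝ} {u x' : Fin n → Euc d}
    {σ : Equiv.Perm (Fin n)} (hopt : IsOptAssign h u x' σ) {U B D : ℝ}
    (hD : ∀ y ∈ closedBall (0 : Euc d) (U + B), ‖h y‖ ≤ D) (hU : ∀ k, ‖u k‖ ≤ U) {j : Fin n}
    (hnear : ‖x' (σ j)‖ ≤ B) (i : Fin n) :
    h (u i - x' (σ i)) ≤ h (u i - x' (σ i) + (u j - u i)) + 2 * D := by
  have hbound : ∀ k, |h (u k - x' (σ j))| ≤ D := fun k => by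
    simpa using hD _ (mem_closedBall_zero_iff.2 (norm_sub_le_of_le (hU k) hnear))
  have hswap := hopt.add_le_swap i j
  rw [show u i - x' (σ i) + (u j - u i) = u j - x' (σ i) by abel]
  simp only [cost] at hswap
  linarith [abs_le.1 (hbound i), abs_le.1 (hbound j)]

lemma exists_unit_card_filter_lt {d n ℓ : ℕ} {h : Euc d → ℝ} (hconv : ConvexOn ℝ univ h)
    (h2 : H2 h) (h3 : H3 h) {u x : Fin n → Euc d} {i : Fin n} (hℓn : ℓ ≤ n)
    (hub : ¬ IsBounded (fsBadSet h u x i ℓ)) :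
    ∃ v : Euc d, ‖v‖ = 1 ∧ #{j | ⟪v, u j - u i⟫ < 0} < ℓ := by
  obtain ⟨b, hb⟩ := Finite.bddAbove_range fun j => ‖u j - u i‖
  obtain ⟨U, hU⟩ := Finite.bddAbove_range fun j => ‖u j‖
  obtain ⟨B, hB⟩ := Finite.bddAbove_range fun j => ‖x j‖
  obtain ⟨D, hD⟩ := (isCompact_closedBall (0 : Euc d) (U + B)).exists_bound_of_continuousOn
    ((hconv.continuousOn isOpen_univ).mono (subset_univ _))
  have hD0 : 0 ≤ D := (norm_nonneg _).trans <| hD _ <| mem_closedBall_zero_iff.2 <|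
    norm_sub_le_of_le (hU (mem_range_self i)) (hB (mem_range_self i))
  have hb0 : 0 ≤ b := (norm_nonneg _).trans (hb (mem_range_self i))
  obtain ⟨θ, -, hθ, hθπ⟩ := exists_seq_strictMono_tendsto' Real.pi_pos
  choose x' σ z hsh hopt hfar hz hmax using fun k : ℕ =>
    exists_optAssign_truncCone h2 hub (by positivity : 0 < b + 1) (hθ k) k
  obtain ⟨w, hw, φ, hφ, hzw⟩ := (isCompact_sphere (0 : Euc d) 1).tendsto_subseq
    (x := z) fun k => mem_sphere_zero_iff_norm.2 (hz k)
  rw [mem_sphere_zero_iff_norm] at hw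
  have hp : Tendsto (fun t => ‖u i - x' (φ t) (σ (φ t) i)‖) atTop atTop :=
    tendsto_atTop_mono (fun t => hfar (φ t)) (tendsto_natCast_atTop_atTop.comp hφ.tendsto_atTop)
  have hcos : Tendsto (fun t => Real.cos (θ (φ t) / 2) * (b + 1)) atTop (𝓝 0) := by
    have := ((Real.continuous_cos.tendsto _).comp (hθπ.div_const 2)).mul_const (b + 1)
    rw [Real.cos_pi_div_two, zero_mul] at this
    exact this.comp hφ.tendsto_atTop
  refine ⟨-w, by rwa [norm_neg], ?_⟩
  set J : Finset (Fin n) := {j | ⟪-w, u j - u i⟫ < 0}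
  have hpartner : ∀ j ∈ J, ∀ᶠ t in atTop, B < ‖x' (φ t) (σ (φ t) j)‖ := by
    intro j hj
    have hm : 0 < ⟪w, u j - u i⟫ := by simpa [J, inner_neg_left] using hj
    obtain ⟨R, hR⟩ := exists_add_lt_of_le_on_truncCone hconv h3 (by positivity : 0 ≤ 2 * D)
      (half_pos hm) (hb (mem_range_self j))
    filter_upwards [hp.eventually_ge_atTop R,
      hcos.eventually (eventually_le_nhds (half_pos (half_pos hm))),
      (hzw.inner tendsto_const_nhds).eventually (eventually_ge_nhds (half_lt_self hm))]
      with t hpR hcost hzδ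
    by_contra! hnear
    have hlt := hR _ _ _ hpR (hz _) (hθ _) hcost hzδ (hmax _)
    linarith [(hopt (φ t)).le_add_of_norm_le hD (fun k => hU (mem_range_self k)) hnear i]
  have hself : ∀ᶠ t in atTop, B < ‖x' (φ t) (σ (φ t) i)‖ := by
    filter_upwards [hp.eventually_gt_atTop (‖u i‖ + B)] with t ht
    linarith [norm_sub_le (u i) (x' (φ t) (σ (φ t) i))]
  obtain ⟨t, hJ, hi⟩ := (((eventually_all_finset J).2 hpartner).and hself).exists
  have hiJ : i ∉ J := by simp [J]
  calc #J < #(insert i J) := card_lt_card (ssubset_insert hiJ)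
    _ ≤ #{j | B < ‖x' (φ t) (σ (φ t) j)‖} := card_le_card (insert_subset (by simpa using hi)
        fun j hj => by simpa using hJ j hj)
    _ ≤ ℓ := by
      have := (hsh (φ t)).card_far_add_le (fun j => hB (mem_range_self j)) (σ (φ t))
      omega

theorem finiteSampleBP_ge_general (d n : ℕ) (hd : 1 ≤ d) (h : Euc d → ℝ)
    (h1 : H1 h) (h2 : H2 h) (h3 : H3 h)
    (u x : Fin n → Euc d)
    (i : Fin n) :
    empTDlt u (u i) + 1 / n ≤ finiteSampleBP h u x i := by
  have : Nonempty (Fin d) := ⟨⟨0, hd⟩⟩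
  -- `sInf ∅ = 0`, so the breakdown index must be shown to exist
  have hn : n ∈ {ℓ : ℕ | 1 ≤ ℓ ∧ ℓ ≤ n ∧ ¬ IsBounded (fsBadSet h u x i ℓ)} :=
    ⟨i.pos, le_rfl, by rw [fsBadSet_eq_univ h u x i le_rfl]; exact NormedSpace.unbounded_univ ℝ _⟩
  obtain ⟨-, hℓn, hub⟩ := Nat.sInf_mem ⟨n, hn⟩
  obtain ⟨v, hv, hcard⟩ := exists_unit_card_filter_lt h1.convexOn h2 h3 hℓn hub
  calc empTDlt u (u i) + 1 / n ≤ #{j | ⟪v, u j - u i⟫ < 0} / n + 1 / n := by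
        gcongr; exact empTDlt_le u (u i) hv
    _ = (#{j | ⟪v, u j - u i⟫ < 0} + 1) / n := by rw [add_div]
    _ ≤ finiteSampleBP h u x i := by
      unfold finiteSampleBP; gcongr; exact_mod_cast hcard

/-- the finite sample breakdown point of `T_{Q_n→P_n}(u_i)` is at least
`TD^-(u_i;Q_n) + 1/n`. -/
theorem finiteSampleBP_ge (d n : ℕ) (hd : 1 ≤ d) (h : Euc d → ℝ)
    (hpos : ∀ x, 0 ≤ h x) (h1 : H1 h) (h2 : H2 h) (h3 : H3 h)
    (u x : Fin n → Euc d) (hu : Function.Injective u) (hx : Function.Injective x)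
    (i : Fin n) :
    empTDlt u (u i) + 1 / n ≤ finiteSampleBP h u x i :=
  finiteSampleBP_ge_general d n hd h h1 h2 h3 u x i

end
end
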